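/- Let S be a Γ-semigroup, γ₀, γ ∈ Γ, with S_{γ₀} completely simple. If L is a minimal left ideal of S_{γ₀}, then L is also a minimal left ideal of S_γ. -/
import Mathlib


open FreeSemigroup

section GammaSemigroup

variable {S Γ : Type}

/-- One-step rewriting on words over S ⊕ Γ. -/
inductive GStep (m : S → Γ → S → S) (γ₀ : Γ) : List (S ⊕ Γ) → List (S ⊕ Γ) → Prop
  | gg (u v : List (S ⊕ Γ)) (γ₁ γ₂ : Γ) :
      GStep m γ₀ (u ++ Sum.inr γ₁ :: Sum.inr γ₂ :: v) (u ++ Sum.inr γ₁ :: v)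
  | xgy (u v : List (S ⊕ Γ)) (x : S) (γ : Γ) (y : S) :
      GStep m γ₀ (u ++ Sum.inl x :: Sum.inr γ :: Sum.inl y :: v) (u ++ Sum.inl (m x γ y) :: v)
  | xy (u v : List (S ⊕ Γ)) (x y : S) :
      GStep m γ₀ (u ++ Sum.inl x :: Sum.inl y :: v) (u ++ Sum.inl (m x γ₀ y) :: v)

/-- The defining relations on the free semigroup on S ⊕ Γ. -/
def GRel (m : S → Γ → S → S) (γ₀ : Γ) :
    FreeSemigroup (S ⊕ Γ) → FreeSemigroup (S ⊕ Γ) → Prop :=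
  fun a b =>
    (∃ γ₁ γ₂ : Γ, a = of (Sum.inr γ₁) * of (Sum.inr γ₂) ∧ b = of (Sum.inr γ₁)) ∨
    (∃ (x y : S) (γ : Γ), a = of (Sum.inl x) * of (Sum.inr γ) * of (Sum.inl y) ∧
      b = of (Sum.inl (m x γ y))) ∨
    (∃ x y : S, a = of (Sum.inl x) * of (Sum.inl y) ∧ b = of (Sum.inl (m x γ₀ y)))

/-- The congruence generated by the defining relations. -/
def GCon (m : S → Γ → S → S) (γ₀ : Γ) : Con (FreeSemigroup (S ⊕ Γ)) := conGen (GRel m γ₀)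

/-- The universal semigroup Σ of the Γ-semigroup S. -/
abbrev USem (m : S → Γ → S → S) (γ₀ : Γ) := (GCon m γ₀).Quotient

/-- The canonical map μ : S → Σ. -/
def gmu (m : S → Γ → S → S) (γ₀ : Γ) (x : S) : USem m γ₀ :=
  ((of (Sum.inl x) : FreeSemigroup (S ⊕ Γ)) : (GCon m γ₀).Quotient)

/-- The canonical map Γ → Σ. -/
def giota (m : S → Γ → S → S) (γ₀ : Γ) (γ : Γ) : USem m γ₀ :=
  ((of (Sum.inr γ) : FreeSemigroup (S ⊕ Γ)) : (GCon m γ₀).Quotient)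

/-- Principal left ideal of an element of a semigroup. -/
def pLeft {T : Type} [Semigroup T] (a : T) : Set T := {w | ∃ t : T, w = t * a} ∪ {a}

/-- Principal right ideal of an element of a semigroup. -/
def pRight {T : Type} [Semigroup T] (a : T) : Set T := {w | ∃ t : T, w = a * t} ∪ {a}

/-- Principal left ideal in the Γ-semigroup: SΓx ∪ {x}. -/
def pLeftG (m : S → Γ → S → S) (x : S) : Set S := {y | ∃ (s : S) (γ : Γ), y = m s γ x} ∪ {x}

/-- Principal right ideal in the Γ-semigroup: xΓS ∪ {x}. -/
def pRightG (m : S → Γ → S → S) (x : S) : Set S := {y | ∃ (γ : Γ) (s : S), y = m x γ s} ∪ {x}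

/-- Green's H relation on the Γ-semigroup. -/
def HrelG (m : S → Γ → S → S) (a b : S) : Prop := pLeftG m a = pLeftG m b ∧ pRightG m a = pRightG m b

/-- S_δ is a simple semigroup: its only two-sided ideal is S itself. -/
def SimpleAt (m : S → Γ → S → S) (δ : Γ) : Prop :=
  ∀ J : Set S, J.Nonempty → (∀ t : S, ∀ j ∈ J, m t δ j ∈ J ∧ m j δ t ∈ J) → J = Set.univ

/-- e is an idempotent of S_δ. -/
def IdemAt (m : S → Γ → S → S) (δ : Γ) (e : S) : Prop := m e δ e = e

/-- e is a primitive idempotent of S_δ. -/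
def PrimAt (m : S → Γ → S → S) (δ : Γ) (e : S) : Prop :=
  IdemAt m δ e ∧ ∀ f, IdemAt m δ f → m e δ f = f → m f δ e = f → f = e

/-- S_δ is completely simple. -/
def CSimpleAt (m : S → Γ → S → S) (δ : Γ) : Prop := SimpleAt m δ ∧ ∃ e, PrimAt m δ e

/-- S_δ has no zero element. -/
def NoZeroAt (m : S → Γ → S → S) (δ : Γ) : Prop := ¬ ∃ z : S, ∀ t : S, m z δ t = z ∧ m t δ z = z

/-- L is a left ideal of S_δ. -/
def LIdealAt (m : S → Γ → S → S) (δ : Γ) (L : Set S) : Prop :=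
  L.Nonempty ∧ ∀ t : S, ∀ l ∈ L, m t δ l ∈ L

/-- L is a minimal left ideal of S_δ. -/
def MinLIdealAt (m : S → Γ → S → S) (δ : Γ) (L : Set S) : Prop :=
  LIdealAt m δ L ∧ ∀ L' ⊆ L, LIdealAt m δ L' → L' = L

/-- S_δ is a group. -/
def GroupAt (m : S → Γ → S → S) (δ : Γ) : Prop :=
  ∃ e : S, (∀ a, m e δ a = a ∧ m a δ e = a) ∧ ∀ a, ∃ b, m a δ b = e ∧ m b δ a = e

/-- G is a subgroup (a sub-semigroup that is a group) of the semigroup T. -/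
def IsSubgroupOf {T : Type} [Semigroup T] (G : Set T) : Prop :=
  (∀ a ∈ G, ∀ b ∈ G, a * b ∈ G) ∧
  ∃ e ∈ G, (∀ g ∈ G, e * g = g ∧ g * e = g) ∧ ∀ g ∈ G, ∃ h ∈ G, g * h = e ∧ h * g = e

/-- The set Σ' = Σ \ Γ. -/
def USem' (m : S → Γ → S → S) (γ₀ : Γ) : Set (USem m γ₀) := {w | ¬ ∃ γ : Γ, w = giota m γ₀ γ}

end GammaSemigroup


private lemma aux_inv {S : Type} [Nonempty S]
    (mul : S → S → S) (assoc : ∀ a b c : S, mul (mul a b) c = mul a (mul b c))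
    (simple : ∀ a b : S, ∃ x y, mul (mul x a) y = b)
    (f : S) (hf : mul f f = f)
    (hprim : ∀ g, mul g g = g → mul f g = g → mul g f = g → g = f)
    (a : S) (ha1 : mul f a = a) (ha2 : mul a f = a) :
    ∃ b, mul b a = f ∧ mul b f = b := by
  obtain ⟨x, y, hxy⟩ := simple a f
  have hf' : ∀ z, mul f (mul f z) = mul f z := fun z => by rw [← assoc, hf]
  have ha1' : ∀ z, mul f (mul a z) = mul a z := fun z => by rw [← assoc, ha1]
  have ha2' : ∀ z, mul a (mul f z) = mul a z := fun z => by rw [← assoc, ha2]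
  have hxy2 : mul x (mul a y) = f := by rw [← assoc, hxy]
  have hxy' : ∀ z, mul x (mul a (mul y z)) = mul f z := fun z => by
    rw [← assoc, ← assoc, hxy]
  refine ⟨mul (mul f (mul y f)) (mul (mul f x) f), ?_, ?_⟩
  · apply hprim
    · simp only [assoc]
      simp only [hf, hf', ha1, ha1', ha2, ha2', hxy', hxy2]
    · simp only [assoc]
      simp only [hf, hf', ha1, ha1', ha2, ha2', hxy', hxy2]
    · simp only [assoc]
      simp only [hf, hf', ha1, ha1', ha2, ha2', hxy', hxy2]
  · simp only [assoc]
    simp only [hf, hf', ha1, ha1', ha2, ha2', hxy', hxy2]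

private lemma aux_key {S Γ : Type} [Nonempty S] (m : S → Γ → S → S)
    (assoc : ∀ (a b c : S) (α β : Γ), m (m a α b) β c = m a α (m b β c))
    (γ₀ γ : Γ) (hcs : CSimpleAt m γ₀) (l : S) : ∃ q, m q γ l = l := by
  obtain ⟨hsimp, f, hfI, hfP⟩ := hcs
  have simple : ∀ a b : S, ∃ x y, m (m x γ₀ a) γ₀ y = b := by
    intro a b
    have hJ : {w : S | ∃ x y, w = m (m x γ₀ a) γ₀ y} = Set.univ := by
      apply hsimp
      · obtain ⟨s⟩ := ‹Nonempty S›
        exact ⟨_, s, s, rfl⟩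
      · rintro t j ⟨x, y, rfl⟩
        constructor
        · exact ⟨m t γ₀ x, y, by simp only [assoc]⟩
        · exact ⟨x, m y γ₀ t, by simp only [assoc]⟩
    have hb : b ∈ {w : S | ∃ x y, w = m (m x γ₀ a) γ₀ y} := hJ ▸ Set.mem_univ b
    obtain ⟨x, y, hb⟩ := hb
    exact ⟨x, y, hb.symm⟩
  have hff : m f γ₀ f = f := hfI
  obtain ⟨x, y, hxy⟩ := simple f l
  set w := m x γ₀ f with hw
  have hwf : m w γ₀ f = w := by rw [hw, assoc x f f γ₀ γ₀, hff]
  set a := m f γ w with ha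
  have ha1 : m f γ₀ a = a := by rw [ha, ← assoc f f w γ₀ γ, hff]
  have ha2 : m a γ₀ f = a := by rw [ha, assoc f w f γ γ₀, hwf]
  obtain ⟨b, hba, hbf⟩ :=
    aux_inv (fun u v => m u γ₀ v) (fun a b c => assoc a b c γ₀ γ₀) simple f hff
      (fun g hg h1 h2 => hfP g hg h1 h2) a ha1 ha2
  refine ⟨m w γ₀ b, ?_⟩
  have hbw : m b γ w = f := by
    calc m b γ w = m (m b γ₀ f) γ w := by rw [hbf]
    _ = m b γ₀ (m f γ w) := assoc b f w γ₀ γ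
    _ = f := hba
  calc m (m w γ₀ b) γ l = m w γ₀ (m b γ l) := assoc w b l γ₀ γ
  _ = m w γ₀ (m b γ (m w γ₀ y)) := by rw [hxy]
  _ = m w γ₀ (m (m b γ w) γ₀ y) := by rw [assoc b w y γ γ₀]
  _ = m (m w γ₀ f) γ₀ y := by rw [hbw, ← assoc w f y γ₀ γ₀]
  _ = l := by rw [hwf, hxy]

theorem stmt (S Γ : Type) [Nonempty S] [Nonempty Γ] (m : S → Γ → S → S)
    (assoc : ∀ (a b c : S) (α β : Γ), m (m a α b) β c = m a α (m b β c)) (γ₀ : Γ) (γ : Γ) (hcs : CSimpleAt m γ₀)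
    (L : Set S) (hL : MinLIdealAt m γ₀ L) : MinLIdealAt m γ L := by
  have hLne := hL.1.1
  have hLcl := hL.1.2
  have hLmin := hL.2
  refine ⟨⟨hLne, fun t l hl => ?_⟩, ?_⟩
  · obtain ⟨q, hq⟩ := aux_key m assoc γ₀ γ₀ hcs l
    have h : m t γ l = m (m t γ q) γ₀ l := by rw [assoc, hq]
    rw [h]
    exact hLcl _ _ hl
  · intro L' hsub hLI
    have hne := hLI.1
    have hcl := hLI.2
    have hsub' : {y : S | ∃ s, ∃ l ∈ L', y = m s γ₀ l} ⊆ L' := by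
      rintro _ ⟨s, l, hl, rfl⟩
      obtain ⟨q, hq⟩ := aux_key m assoc γ₀ γ hcs l
      have h : m s γ₀ l = m (m s γ₀ q) γ l := by rw [assoc, hq]
      rw [h]
      exact hcl _ _ hl
    have hN : {y : S | ∃ s, ∃ l ∈ L', y = m s γ₀ l} = L := by
      apply hLmin
      · exact hsub'.trans hsub
      · constructor
        · obtain ⟨l, hl⟩ := hne
          obtain ⟨s⟩ := ‹Nonempty S›
          exact ⟨_, s, l, hl, rfl⟩
        · rintro t _ ⟨s, l, hl, rfl⟩
          exact ⟨m t γ₀ s, l, hl, by rw [assoc]⟩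
    exact hsub.antisymm (hN ▸ hsub')
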